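/- arXiv:2305.14015 — 11 statements merged into one kernel-verified Lean document; each statement's English description precedes it below -/
import Mathlib

section
/- For every natural number n ≥ 1 and real numbers a_1, ..., a_n, with the conventions a_0 := 0 and a_{n+1} := 0, we have ∑_{k=1}^{n+1} (a_k - a_{k-1})² ≥ 2(1 - cos(π/(n+1))) · ∑_{k=1}^{n} a_k². -/
open Real Finset

/-!
The vector `w k = sin (k π / (n + 1))` is positive on `1, …, n`, vanishes at `0` and `n + 1`,
and satisfies `w (k - 1) + w (k + 1) = 2 cos (π / (n + 1)) w k`. Bounding each edge term by the
weighted AM–GM inequality `2 x y ≤ (p / q) x ^ 2 + (q / p) y ^ 2` with `p / q` the ratio of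
consecutive weights and regrouping by vertices, the coefficient of `a k ^ 2` becomes
`2 - (w (k - 1) + w (k + 1)) / w k`, which is `2 - 2 cos (π / (n + 1))`.
-/

/-- The disjunctions admit the boundary edges, where a weight may vanish (and `_ / 0 = 0`). -/
lemma one_sub_div_mul_sq_add_le_sq_sub {p q x y : ℝ} (hp : 0 ≤ p) (hq : 0 ≤ q)
    (hx : x = 0 ∨ 0 < q) (hy : y = 0 ∨ 0 < p) :
    (1 - p / q) * x ^ 2 + (1 - q / p) * y ^ 2 ≤ (x - y) ^ 2 := by
  rcases hx with rfl | hq'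
  · rcases hy with rfl | hp'
    · simp
    · nlinarith [div_nonneg hq hp, sq_nonneg y]
  rcases hy with rfl | hp'
  · nlinarith [div_nonneg hp hq, sq_nonneg x]
  have gap : (x - y) ^ 2 - ((1 - p / q) * x ^ 2 + (1 - q / p) * y ^ 2)
      = (p * x - q * y) ^ 2 / (p * q) := by
    field_simp
    ring
  rw [← sub_nonneg, gap]
  positivity

theorem mul_sum_sq_le_sum_sq_sub_of_supersolution (n : ℕ) (a w : ℕ → ℝ) (c : ℝ)
    (ha0 : a 0 = 0) (han : a (n + 1) = 0)
    (hw_nonneg : ∀ k ≤ n + 1, 0 ≤ w k) (hw_pos : ∀ k ∈ Icc 1 n, 0 < w k)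
    (hsuper : ∀ k ∈ Icc 1 n, w (k - 1) + w (k + 1) ≤ c * w k) :
    (2 - c) * ∑ k ∈ Icc 1 n, a k ^ 2 ≤ ∑ k ∈ Icc 1 (n + 1), (a k - a (k - 1)) ^ 2 := by
  have edge : ∀ k ∈ Icc 1 (n + 1), (1 - w (k - 1) / w k) * a k ^ 2
      + (1 - w k / w (k - 1)) * a (k - 1) ^ 2 ≤ (a k - a (k - 1)) ^ 2 := by
    intro k hk
    rw [mem_Icc] at hk
    refine one_sub_div_mul_sq_add_le_sq_sub (hw_nonneg _ (by omega)) (hw_nonneg _ hk.2) ?_ ?_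
    · rcases hk.2.eq_or_lt with rfl | hlt
      · exact .inl han
      · exact .inr (hw_pos k (mem_Icc.2 ⟨hk.1, by omega⟩))
    · rcases hk.1.eq_or_lt with rfl | hlt
      · exact .inl ha0
      · exact .inr (hw_pos (k - 1) (mem_Icc.2 ⟨by omega, by omega⟩))
  have regroup : ∑ k ∈ Icc 1 (n + 1), ((1 - w (k - 1) / w k) * a k ^ 2
      + (1 - w k / w (k - 1)) * a (k - 1) ^ 2)
      = ∑ k ∈ Icc 1 n, (2 - (w (k - 1) + w (k + 1)) / w k) * a k ^ 2 := by
    rw [sum_add_distrib, sum_Icc_succ_top (by omega), han, ← image_add_right_Icc 0 n 1,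
      sum_image (by simp), Icc_eq_cons_Ioc n.zero_le, sum_cons, ← Icc_add_one_left_eq_Ioc]
    simp only [zero_add, add_tsub_cancel_right, ha0, ne_eq, OfNat.ofNat_ne_zero,
      not_false_eq_true, zero_pow, mul_zero, add_zero, ← sum_add_distrib]
    refine sum_congr rfl fun k _ => ?_
    rw [add_div]
    ring
  have coeff : ∀ k ∈ Icc 1 n,
      (2 - c) * a k ^ 2 ≤ (2 - (w (k - 1) + w (k + 1)) / w k) * a k ^ 2 := by
    intro k hk
    gcongr
    exact (div_le_iff₀ (hw_pos k hk)).2 (hsuper k hk)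
  calc (2 - c) * ∑ k ∈ Icc 1 n, a k ^ 2
      ≤ ∑ k ∈ Icc 1 n, (2 - (w (k - 1) + w (k + 1)) / w k) * a k ^ 2 := by
        rw [mul_sum]; exact sum_le_sum coeff
    _ = _ := regroup.symm
    _ ≤ _ := sum_le_sum edge

lemma sin_sub_add_sin_add (x y : ℝ) : sin (x - y) + sin (x + y) = 2 * cos y * sin x := by
  rw [sin_sub, sin_add]
  ring

theorem ftt_one_general (n : ℕ) (a : ℕ → ℝ) (h0 : a 0 = 0) (hn1 : a (n + 1) = 0) :
    ∑ k ∈ Finset.Icc 1 (n + 1), (a k - a (k - 1)) ^ 2 ≥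
      2 * (1 - Real.cos (π / (n + 1))) * ∑ k ∈ Finset.Icc 1 n, a k ^ 2 := by
  set θ := π / (n + 1) with hθ_def
  have hθn : (n + 1 : ℝ) * θ = π := by rw [hθ_def]; field_simp
  have hw_nonneg : ∀ k ≤ n + 1, 0 ≤ sin (k * θ) := fun k hk =>
    sin_nonneg_of_nonneg_of_le_pi (by positivity) (hθn ▸ by gcongr; exact_mod_cast hk)
  have hw_pos : ∀ k ∈ Icc 1 n, 0 < sin (k * θ) := by
    intro k hk
    rw [mem_Icc] at hk
    refine sin_pos_of_pos_of_lt_pi (mul_pos (by exact_mod_cast hk.1) (by positivity)) ?_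
    rw [← hθn]
    gcongr
    exact_mod_cast Nat.lt_succ_of_le hk.2
  have hsuper : ∀ k ∈ Icc 1 n,
      sin ((k - 1 : ℕ) * θ) + sin ((k + 1 : ℕ) * θ) ≤ 2 * cos θ * sin (k * θ) := by
    intro k hk
    rw [Nat.cast_sub (mem_Icc.1 hk).1]
    push_cast
    rw [sub_mul, add_mul, one_mul, sin_sub_add_sin_add]
  rw [ge_iff_le, show 2 * (1 - cos θ) = 2 - 2 * cos θ by ring]
  exact mul_sum_sq_le_sum_sq_sub_of_supersolution n a (fun k => sin (k * θ)) _ h0 hn1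
    hw_nonneg hw_pos hsuper

/-- Fan–Taussky–Todd inequality:
for `a₁, …, aₙ` with `a₀ = a_{n+1} = 0`,
`∑_{k=1}^{n+1} (a_k - a_{k-1})² ≥ 2(1 - cos(π/(n+1))) ∑_{k=1}^n a_k²`. -/
theorem ftt_one (n : ℕ) (hn : 1 ≤ n) (a : ℕ → ℝ) (h0 : a 0 = 0) (hn1 : a (n + 1) = 0) :
    ∑ k ∈ Finset.Icc 1 (n + 1), (a k - a (k - 1)) ^ 2 ≥
      2 * (1 - Real.cos (π / (n + 1))) * ∑ k ∈ Finset.Icc 1 n, a k ^ 2 :=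
  ftt_one_general n a h0 hn1
end

section
/- For every natural number n ≥ 1 and real numbers a_1, ..., a_n, with the convention a_0 := 0, we have ∑_{k=1}^{n} (a_k - a_{k-1})² ≥ 2(1 - cos(π/(2n+1))) · ∑_{k=1}^{n} a_k². -/
open Real Finset

/-- Fan–Taussky–Todd inequality:
for `a₁, …, aₙ` with `a₀ = 0`,
`∑_{k=1}^{n} (a_k - a_{k-1})² ≥ 2(1 - cos(π/(2n+1))) ∑_{k=1}^n a_k²`. -/
theorem ftt_two (n : ℕ) (hn : 1 ≤ n) (a : ℕ → ℝ) (h0 : a 0 = 0) :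
    ∑ k ∈ Finset.Icc 1 n, (a k - a (k - 1)) ^ 2 ≥
      2 * (1 - Real.cos (π / (2 * n + 1))) * ∑ k ∈ Finset.Icc 1 n, a k ^ 2 := by
  set θ : ℝ := π / (2 * n + 1) with hθdef
  set c : ℝ := 2 * (1 - Real.cos θ) with hcdef
  set s : ℕ → ℝ := fun k => Real.sin (k * θ) with hsdef
  have hden : (0:ℝ) < 2 * n + 1 := by positivity
  have hθpos : 0 < θ := by
    rw [hθdef]; exact div_pos Real.pi_pos hden
  have hπ : (2 * (n:ℝ) + 1) * θ = π := by
    rw [hθdef]; field_simp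
  have hspos : ∀ k : ℕ, 1 ≤ k → k ≤ n → 0 < s k := by
    intro k h1 h2
    apply Real.sin_pos_of_pos_of_lt_pi
    · have : (1:ℝ) ≤ (k:ℝ) := by exact_mod_cast h1
      nlinarith
    · have hk : (k:ℝ) ≤ (n:ℝ) := by exact_mod_cast h2
      have : (k:ℝ) * θ < (2 * n + 1) * θ := by nlinarith
      linarith [hπ]
  have hrec : ∀ k : ℕ, s (k + 2) + s k = 2 * Real.cos θ * s (k + 1) := by
    intro k
    have e1 : ((k:ℝ) + 2) * θ = ((k:ℝ) + 1) * θ + θ := by ring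
    have e2 : (k:ℝ) * θ = ((k:ℝ) + 1) * θ - θ := by ring
    simp only [hsdef]
    push_cast
    rw [e1, e2, Real.sin_add, Real.sin_sub]
    ring
  have hlast : s (n + 1) = s n := by
    have e : ((n:ℝ) + 1) * θ = π - (n:ℝ) * θ := by
      rw [← hπ]; ring
    simp only [hsdef]
    push_cast
    rw [e, Real.sin_pi_sub]
  have key : ∀ m : ℕ, 1 ≤ m → m ≤ n →
      ∑ k ∈ Finset.Icc 1 m, (a k - a (k - 1)) ^ 2 ≥
        c * ∑ k ∈ Finset.Icc 1 m, a k ^ 2 + ((s (m + 1) - s m) / s m) * a m ^ 2 := by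
    intro m
    induction m with
    | zero => intro h; omega
    | succ m ih =>
      intro _ hmn
      rcases Nat.eq_zero_or_pos m with hm0 | hm1
      · -- base case m+1 = 1
        subst hm0
        simp only [Finset.Icc_self, Finset.sum_singleton]
        have hs1 : 0 < s 1 := hspos 1 le_rfl hn
        have hs2 : s 2 = 2 * Real.cos θ * s 1 := by
          have := hrec 0
          simp only [hsdef] at this ⊢
          push_cast at this ⊢
          simpa using this
        have hr : (s (1 + 1) - s 1) / s 1 = 2 * Real.cos θ - 1 := by
          rw [show (1+1 : ℕ) = 2 from rfl, hs2]
          field_simp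
        rw [hr, h0]
        have : c + (2 * Real.cos θ - 1) = 1 := by rw [hcdef]; ring
        nlinarith [sq_nonneg (a 1)]
      · -- inductive step
        have hmn' : m ≤ n := Nat.le_of_succ_le hmn
        have ihm := ih hm1 hmn'
        have hsm : 0 < s m := hspos m hm1 hmn'
        have hsm1 : 0 < s (m + 1) := hspos (m + 1) (Nat.le_add_left 1 m) hmn
        have hs2 : s (m + 2) = 2 * Real.cos θ * s (m + 1) - s m := by
          have := hrec m; linarith
        -- step inequality
        have step : ((s (m + 1) - s m) / s m) * a m ^ 2 + (a (m + 1) - a m) ^ 2 ≥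
            c * a (m + 1) ^ 2 + ((s (m + 2) - s (m + 1)) / s (m + 1)) * a (m + 1) ^ 2 := by
          have hid : ((s (m + 1) - s m) / s m) * a m ^ 2 + (a (m + 1) - a m) ^ 2
              - (c * a (m + 1) ^ 2 + ((s (m + 2) - s (m + 1)) / s (m + 1)) * a (m + 1) ^ 2)
              = (s (m + 1) * a m - s m * a (m + 1)) ^ 2 / (s m * s (m + 1)) := by
            rw [hs2, hcdef]
            field_simp
            ring
          have hnn : (0:ℝ) ≤ (s (m + 1) * a m - s m * a (m + 1)) ^ 2 / (s m * s (m + 1)) :=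
            div_nonneg (sq_nonneg _) (le_of_lt (mul_pos hsm hsm1))
          linarith [hid ▸ hnn]
        -- combine
        rw [Finset.sum_Icc_succ_top (by omega : 1 ≤ m + 1),
            Finset.sum_Icc_succ_top (by omega : 1 ≤ m + 1)]
        have hsimp : a (m + 1 - 1) = a m := by norm_num
        rw [hsimp]
        have expand : c * (∑ k ∈ Finset.Icc 1 m, a k ^ 2 + a (m + 1) ^ 2)
            = c * ∑ k ∈ Finset.Icc 1 m, a k ^ 2 + c * a (m + 1) ^ 2 := by ring
        have h21 : m + 1 + 1 = m + 2 := rfl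
        rw [expand]
        rw [h21]
        linarith [ihm, step]
  have final := key n hn le_rfl
  rw [hlast] at final
  simp at final
  linarith [final]
end

section
/- For every natural number n ≥ 1 and real numbers a_1, ..., a_n, with the conventions a_0 := 0 and a_{n+1} := 0, we have ∑_{k=1}^{n+1} (a_k - a_{k-1})² ≤ 2(1 + cos(π/(n+1))) · ∑_{k=1}^{n} a_k². -/
open Real Finset

/-- Converse Fan–Taussky–Todd inequality:
for `a₁, …, aₙ` with `a₀ = a_{n+1} = 0`,
`∑_{k=1}^{n+1} (a_k - a_{k-1})² ≤ 2(1 + cos(π/(n+1))) ∑_{k=1}^n a_k²`. -/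
theorem ftt_conv_one (n : ℕ) (hn : 1 ≤ n) (a : ℕ → ℝ) (h0 : a 0 = 0) (hn1 : a (n + 1) = 0) :
    ∑ k ∈ Finset.Icc 1 (n + 1), (a k - a (k - 1)) ^ 2 ≤
      2 * (1 + Real.cos (π / (n + 1))) * ∑ k ∈ Finset.Icc 1 n, a k ^ 2 := by
  have hN : (0:ℝ) < (n:ℝ) + 1 := by positivity
  set c : ℝ := Real.cos (π / ((n:ℝ) + 1)) with hc
  set s : ℕ → ℝ := fun k => Real.sin (k * π / ((n:ℝ) + 1)) with hs
  have hspos : ∀ j : ℕ, 1 ≤ j → j ≤ n → 0 < s j := by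
    intro j h1 h2
    apply Real.sin_pos_of_pos_of_lt_pi
    · have : (1:ℝ) ≤ (j:ℝ) := by exact_mod_cast h1
      positivity
    · rw [div_lt_iff₀ hN]
      have hj : (j:ℝ) < (n:ℝ) + 1 := by exact_mod_cast Nat.lt_succ_of_le h2
      nlinarith [Real.pi_pos]
  have hs0 : s 0 = 0 := by simp [hs]
  have hsn1 : s (n+1) = 0 := by
    have h : ((n:ℝ)+1) * π / ((n:ℝ)+1) = π := by field_simp
    simp only [hs]
    push_cast
    rw [h, Real.sin_pi]
  have hrec : ∀ i : ℕ, s i + s (i+2) = 2 * c * s (i+1) := by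
    intro i
    have h1 : (i:ℝ) * π / ((n:ℝ)+1) = ((i:ℝ)+1) * π/((n:ℝ)+1) - π/((n:ℝ)+1) := by ring
    have h2 : ((i:ℝ)+2) * π / ((n:ℝ)+1) = ((i:ℝ)+1) * π/((n:ℝ)+1) + π/((n:ℝ)+1) := by ring
    simp only [hs, hc]
    push_cast
    rw [h1, h2, Real.sin_sub, Real.sin_add]
    ring
  rw [← Finset.Ico_add_one_right_eq_Icc, ← Finset.Ico_add_one_right_eq_Icc, Finset.sum_Ico_eq_sum_range,
    Finset.sum_Ico_eq_sum_range]
  simp only [Nat.succ_sub_one, Nat.add_sub_cancel, Nat.add_sub_cancel_left]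
  have key : ∀ i ∈ Finset.range (n+1),
      (a (1+i) - a i)^2 ≤ (1 + s i / s (i+1)) * a (1+i)^2 + (1 + s (i+1) / s i) * a i^2 := by
    intro i hi
    rw [Finset.mem_range] at hi
    rcases Nat.eq_zero_or_pos i with rfl | hi1
    · simp [h0, hs0]
    rcases eq_or_lt_of_le (Nat.lt_succ_iff.mp hi) with rfl | hi2
    · have : a (1 + i) = 0 := by rw [Nat.add_comm]; exact hn1
      rw [this, hsn1]
      have hpos := hspos i hi1 le_rfl
      simp [div_self hpos.ne']
    · have hp := hspos i hi1 (by omega)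
      have hq := hspos (i+1) (by omega) (by omega)
      rw [← sub_nonneg]
      have heq : (1 + s i / s (i+1)) * a (1+i)^2 + (1 + s (i+1) / s i) * a i^2
          - (a (1+i) - a i)^2 = (s i * a (1+i) + s (i+1) * a i)^2 / (s i * s (i+1)) := by
        field_simp
        ring
      rw [heq]
      positivity
  calc ∑ i ∈ Finset.range (n+1), (a (1+i) - a i)^2
      ≤ ∑ i ∈ Finset.range (n+1),
          ((1 + s i / s (i+1)) * a (1+i)^2 + (1 + s (i+1) / s i) * a i^2) :=
        Finset.sum_le_sum key
    _ = ∑ i ∈ Finset.range (n+1), (1 + s i / s (i+1)) * a (1+i)^2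
        + ∑ i ∈ Finset.range (n+1), (1 + s (i+1) / s i) * a i^2 :=
        Finset.sum_add_distrib
    _ = ∑ i ∈ Finset.range n, (1 + s i / s (i+1)) * a (1+i)^2
        + ∑ i ∈ Finset.range n, (1 + s (i+2) / s (i+1)) * a (i+1)^2 := by
        rw [Finset.sum_range_succ, Finset.sum_range_succ']
        have h1 : a (1+n) = 0 := by rw [Nat.add_comm]; exact hn1
        simp [h1, h0]
    _ = ∑ i ∈ Finset.range n, (2 * (1 + c)) * a (1+i)^2 := by
        rw [← Finset.sum_add_distrib]
        apply Finset.sum_congr rfl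
        intro i hi
        rw [Finset.mem_range] at hi
        have hq := hspos (i+1) (by omega) (by omega)
        have hr := hrec i
        have : (1 + s i / s (i+1)) + (1 + s (i+2) / s (i+1)) = 2 * (1 + c) := by
          field_simp
          linarith
        have hai : a (i+1) = a (1+i) := by rw [Nat.add_comm]
        rw [hai, ← add_mul, this]
    _ = 2 * (1 + c) * ∑ i ∈ Finset.range n, a (1+i)^2 := by
        rw [Finset.mul_sum]
end

section
/- Let n ≥ 1 and α ∈ ℝ. The n×n Jordan block J_n(α) is dissipative (i.e. ⟨J_n(α)a, a⟩ ≤ 0 for all a ∈ ℝⁿ with the Euclidean inner product) if and only if α ≤ -cos(π/(n+1)). -/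
open Real Matrix

/-- The `n × n` Jordan block with `x` on the main diagonal and `1` on the superdiagonal. -/
noncomputable def jordanBlock (n : ℕ) (x : ℝ) : Matrix (Fin n) (Fin n) ℝ :=
  Matrix.of fun i j => if (j : ℕ) = (i : ℕ) then x else if (j : ℕ) = (i : ℕ) + 1 then 1 else 0

/-!
Write the coordinates of `a` as `b 0, …, b (n-1)` and pad with `b n = 0`; then
`⟨J_n(α) a, a⟩ = α ∑ b_k² + ∑ b_{k+1} b_k`. The sine vector `t_k = sin (k π / (n + 1))` is positive
for `1 ≤ k ≤ n`, vanishes at `k = 0` and `k = n + 1`, and satisfies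
`t_k + t_{k+2} = 2 cos (π / (n + 1)) t_{k+1}`. Weighted AM-GM,
`b_{k+1} b_k ≤ (t_{k+2} / t_{k+1} · b_k² + t_{k+1} / t_{k+2} · b_{k+1}²) / 2`, summed and regrouped
with this recurrence, bounds `∑ b_{k+1} b_k` by `cos (π / (n + 1)) ∑ b_k²`, with equality at
`b_k = t_{k+1}`.
-/

open Finset

lemma jordanBlock_mulVec_apply {n : ℕ} (x : ℝ) {b : ℕ → ℝ} (hb : b n = 0) (i : Fin n) :
    (jordanBlock n x *ᵥ fun j : Fin n => b j) i = x * b i + b (i + 1) := by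
  have hsplit : ∀ j : Fin n, jordanBlock n x i j * b j =
      (if (i : ℕ) = j then x * b j else 0) + (if (i : ℕ) + 1 = j then b j else 0) := by
    intro j
    simp only [jordanBlock, of_apply]
    split_ifs <;> first | omega | ring
  rw [mulVec, dotProduct, Finset.sum_congr rfl fun j _ => hsplit j,
    Fin.sum_univ_eq_sum_range (fun j => (if (i : ℕ) = j then x * b j else 0) +
      (if (i : ℕ) + 1 = j then b j else 0)), sum_add_distrib, sum_ite_eq, sum_ite_eq]
  rcases (Nat.succ_le_of_lt i.isLt).lt_or_eq with h | h
  · simp [i.isLt, h]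
  · have : b (i + 1) = 0 := by rw [← Nat.succ_eq_add_one, h, hb]
    simp [this]

lemma jordanBlock_mulVec_dotProduct {n : ℕ} (x : ℝ) {b : ℕ → ℝ} (hb : b n = 0) :
    (jordanBlock n x *ᵥ fun i : Fin n => b i) ⬝ᵥ (fun i : Fin n => b i) =
      x * ∑ k ∈ range n, b k ^ 2 + ∑ k ∈ range n, b (k + 1) * b k := by
  simp only [dotProduct, jordanBlock_mulVec_apply x hb]
  rw [Fin.sum_univ_eq_sum_range (fun k => (x * b k + b (k + 1)) * b k), mul_sum,
    ← sum_add_distrib]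
  exact sum_congr rfl fun k _ => by ring

lemma mul_le_half_div_mul_sq_add_div_mul_sq {u v : ℝ} (hu : 0 < u) (hv : 0 < v) (x y : ℝ) :
    x * y ≤ (v / u * x ^ 2 + u / v * y ^ 2) / 2 := by
  have key : v / u * x ^ 2 + u / v * y ^ 2 - 2 * (x * y) = (v * x - u * y) ^ 2 / (u * v) := by
    field_simp; ring
  have : 0 ≤ (v * x - u * y) ^ 2 / (u * v) := by positivity
  linarith

lemma sum_mul_succ_eq_of_recurrence {n : ℕ} {c : ℝ} {t : ℕ → ℝ} (ht0 : t 0 = 0)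
    (htn : t (n + 1) = 0) (hrec : ∀ k < n, t k + t (k + 2) = 2 * c * t (k + 1)) :
    ∑ k ∈ range n, t (k + 2) * t (k + 1) = c * ∑ k ∈ range n, t (k + 1) ^ 2 := by
  have hshift : ∑ k ∈ range n, t k * t (k + 1) = ∑ k ∈ range n, t (k + 2) * t (k + 1) := by
    have := sum_range_succ' (fun k => t k * t (k + 1)) n
    rw [sum_range_succ, htn, ht0] at this
    simpa [mul_comm] using this
  have hexp : 2 * (c * ∑ k ∈ range n, t (k + 1) ^ 2) =
      ∑ k ∈ range n, t k * t (k + 1) + ∑ k ∈ range n, t (k + 2) * t (k + 1) := by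
    rw [mul_sum, mul_sum, ← sum_add_distrib]
    refine sum_congr rfl fun k hk => ?_
    linear_combination (t (k + 1)) * (hrec k (mem_range.mp hk)).symm
  linarith

lemma sum_mul_succ_le_of_recurrence {n : ℕ} {c : ℝ} {t : ℕ → ℝ} (ht0 : t 0 = 0)
    (htn : t (n + 1) = 0) (hrec : ∀ k < n, t k + t (k + 2) = 2 * c * t (k + 1))
    (hpos : ∀ k, 1 ≤ k → k ≤ n → 0 < t k) {b : ℕ → ℝ} (hb : b n = 0) :
    ∑ k ∈ range n, b (k + 1) * b k ≤ c * ∑ k ∈ range n, b k ^ 2 := by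
  set w : ℕ → ℝ := fun k => t k / t (k + 1) * b k ^ 2
  have hamgm : ∀ k < n, b (k + 1) * b k ≤
      (t (k + 2) / t (k + 1) * b k ^ 2 + w (k + 1)) / 2 := by
    intro k hk
    rcases (Nat.succ_le_of_lt hk).lt_or_eq with h | h
    · rw [mul_comm]
      exact mul_le_half_div_mul_sq_add_div_mul_sq (hpos (k + 1) le_add_self hk)
        (hpos (k + 2) le_add_self h) _ _
    · -- both sides vanish: `b n = 0`, and `t (n + 1) = 0` makes the divisions by it junk `0`
      obtain rfl : k + 1 = n := h
      simp [w, hb, htn]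
  have hshift : ∑ k ∈ range n, w (k + 1) = ∑ k ∈ range n, w k := by
    have := sum_range_succ' w n
    rw [sum_range_succ] at this
    simpa [w, ht0, hb] using this.symm
  have hcoef : ∀ k < n, t (k + 2) / t (k + 1) * b k ^ 2 + w k = 2 * c * b k ^ 2 := by
    intro k hk
    have := (hpos (k + 1) le_add_self hk).ne'
    simp only [w]
    rw [← add_mul, ← add_div, add_comm, hrec k hk]
    field_simp
  calc ∑ k ∈ range n, b (k + 1) * b k
      ≤ ∑ k ∈ range n, (t (k + 2) / t (k + 1) * b k ^ 2 + w (k + 1)) / 2 :=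
        sum_le_sum fun k hk => hamgm k (mem_range.mp hk)
    _ = (∑ k ∈ range n, (t (k + 2) / t (k + 1) * b k ^ 2 + w k)) / 2 := by
        rw [← sum_div, sum_add_distrib, sum_add_distrib, hshift]
    _ = c * ∑ k ∈ range n, b k ^ 2 := by
        rw [sum_congr rfl fun k hk => hcoef k (mem_range.mp hk), ← mul_sum]
        ring

lemma sin_mul_add_sin_add_two_mul (x θ : ℝ) :
    sin (x * θ) + sin ((x + 2) * θ) = 2 * cos θ * sin ((x + 1) * θ) := by
  have hx : x * θ = (x + 1) * θ - θ := by ring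
  have hx2 : (x + 2) * θ = (x + 1) * θ + θ := by ring
  rw [hx, hx2, sin_sub, sin_add]
  ring

lemma sin_nat_mul_pi_div_pos {n k : ℕ} (hk : 1 ≤ k) (hkn : k ≤ n) :
    0 < sin (k * (π / (n + 1))) := by
  have hk' : (1 : ℝ) ≤ k := by exact_mod_cast hk
  have hkn' : (k : ℝ) < n + 1 := by exact_mod_cast Nat.lt_succ_of_le hkn
  apply sin_pos_of_pos_of_lt_pi (by positivity)
  calc (k : ℝ) * (π / (n + 1)) < (n + 1) * (π / (n + 1)) := by gcongr
    _ = π := mul_div_cancel₀ π (by positivity)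

/-- `J_n(α)` is dissipative iff `α ≤ -cos(π/(n+1))`. -/
theorem jordanBlock_dissipative_iff (n : ℕ) (hn : 1 ≤ n) (α : ℝ) :
    (∀ a : Fin n → ℝ, (jordanBlock n α).mulVec a ⬝ᵥ a ≤ 0) ↔
      α ≤ -Real.cos (π / (n + 1)) := by
  set θ := π / (n + 1)
  set t : ℕ → ℝ := fun k => sin (k * θ)
  have ht0 : t 0 = 0 := by simp [t]
  have htn : t (n + 1) = 0 := by
    simp only [t, θ]
    rw [Nat.cast_succ, mul_div_cancel₀ π (by positivity), sin_pi]
  have hrec : ∀ k < n, t k + t (k + 2) = 2 * cos θ * t (k + 1) := fun k _ => by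
    simpa [t] using sin_mul_add_sin_add_two_mul k θ
  have hpos : ∀ k, 1 ≤ k → k ≤ n → 0 < t k := fun k => sin_nat_mul_pi_div_pos
  constructor
  · intro h
    have hS : 0 < ∑ k ∈ range n, t (k + 1) ^ 2 :=
      sum_pos (fun k hk => pow_pos (hpos _ le_add_self (mem_range.mp hk)) 2)
        (nonempty_range_iff.mpr (by omega))
    have hneg := h fun i => t (i + 1)
    rw [jordanBlock_mulVec_dotProduct α (b := fun k => t (k + 1)) htn,
      sum_mul_succ_eq_of_recurrence ht0 htn hrec] at hneg
    nlinarith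
  · intro hα a
    set b : ℕ → ℝ := fun k => if h : k < n then a ⟨k, h⟩ else 0
    have hbn : b n = 0 := by simp [b]
    have ha : a = fun i : Fin n => b i := by ext i; simp [b]
    have hS : 0 ≤ ∑ k ∈ range n, b k ^ 2 := sum_nonneg fun k _ => sq_nonneg _
    rw [ha, jordanBlock_mulVec_dotProduct α hbn]
    nlinarith [sum_mul_succ_le_of_recurrence ht0 htn hrec hpos hbn]
end

section
/- Let n ≥ 1 and α ∈ ℝ. The matrix -J_n(α) is dissipative (i.e. ⟨J_n(α)a, a⟩ ≥ 0 for all a ∈ ℝⁿ with the Euclidean inner product) if and only if α ≥ cos(π/(n+1)). -/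
open Real Matrix

open Finset

namespace JBAux

noncomputable def b (n : ℕ) (a : Fin n → ℝ) (k : ℕ) : ℝ :=
  if h : k < n then a ⟨k, h⟩ else 0

noncomputable def s (n : ℕ) (j : ℕ) : ℝ := Real.sin (j * (π / (n + 1)))

lemma s_pos (n : ℕ) {j : ℕ} (h1 : 1 ≤ j) (h2 : j ≤ n) : 0 < s n j := by
  have hθ : 0 < π / ((n:ℝ) + 1) := by positivity
  apply Real.sin_pos_of_pos_of_lt_pi
  · have : (1:ℝ) ≤ (j:ℝ) := by exact_mod_cast h1
    nlinarith
  · have hj : (j:ℝ) < (n:ℝ) + 1 := by exact_mod_cast Nat.lt_succ_of_le h2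
    have hπ : ((n:ℝ)+1) * (π / ((n:ℝ)+1)) = π := by field_simp
    calc (j:ℝ) * (π / ((n:ℝ)+1)) < ((n:ℝ)+1) * (π / ((n:ℝ)+1)) :=
          mul_lt_mul_of_pos_right hj hθ
      _ = π := hπ

lemma s_zero (n : ℕ) : s n 0 = 0 := by simp [s]

lemma s_np1 (n : ℕ) : s n (n+1) = 0 := by
  have : ((n:ℝ)+1) * (π / ((n:ℝ)+1)) = π := by field_simp
  simp [s, this]

lemma s_rec (n j : ℕ) :
    s n j + s n (j+2) = 2 * Real.cos (π / (n + 1)) * s n (j+1) := by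
  unfold s
  have h1 : ((j:ℝ)+2) * (π / ((n:ℝ)+1)) = ((j:ℝ)+1) * (π / ((n:ℝ)+1)) + π / ((n:ℝ)+1) := by ring
  have h2 : (j:ℝ) * (π / ((n:ℝ)+1)) = ((j:ℝ)+1) * (π / ((n:ℝ)+1)) - π / ((n:ℝ)+1) := by ring
  push_cast
  rw [h1, h2, Real.sin_add, Real.sin_sub]
  ring



lemma key (n : ℕ) (hn : 1 ≤ n) (f : ℕ → ℝ) :
    Real.cos (π / (n + 1)) * ∑ j ∈ range n, (f j)^2 + ∑ j ∈ range (n-1), f j * f (j+1)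
    = ∑ j ∈ range (n-1),
        (s n (j+2) * f j + s n (j+1) * f (j+1))^2 / (2 * s n (j+1) * s n (j+2)) := by
  set c := Real.cos (π / (n + 1)) with hc
  set t1 : ℕ → ℝ := fun j => s n (j+2) / (2 * s n (j+1)) * (f j)^2 with ht1
  set t2 : ℕ → ℝ := fun j => s n j / (2 * s n (j+1)) * (f j)^2 with ht2
  have hsplit : ∀ j < n, c * (f j)^2 = t1 j + t2 j := by
    intro j hj
    have hpos : 0 < s n (j+1) := s_pos n (by omega) (by omega)
    have hrec := s_rec n j
    rw [ht1, ht2]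
    field_simp
    nlinarith [hrec]
  obtain ⟨m, rfl⟩ : ∃ m, n = m + 1 := ⟨n - 1, by omega⟩
  have hm : m + 1 - 1 = m := rfl
  rw [hm]
  have e1 : c * ∑ j ∈ range (m+1), (f j)^2 = ∑ j ∈ range (m+1), (t1 j + t2 j) := by
    rw [Finset.mul_sum]
    exact Finset.sum_congr rfl fun j hj => hsplit j (mem_range.mp hj)
  have e2 : ∑ j ∈ range (m+1), (t1 j + t2 j)
      = (∑ j ∈ range m, t1 j) + t1 m + (t2 0 + ∑ j ∈ range m, t2 (j+1)) := by
    rw [Finset.sum_add_distrib, Finset.sum_range_succ, Finset.sum_range_succ' t2]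
    ring
  have h1m : t1 m = 0 := by
    simp [ht1, s_np1 (m+1)]
  have h20 : t2 0 = 0 := by simp [ht2, s_zero]
  have e3 : ∀ j ∈ range m,
      (s (m+1) (j+2) * f j + s (m+1) (j+1) * f (j+1))^2 / (2 * s (m+1) (j+1) * s (m+1) (j+2))
        = t1 j + f j * f (j+1) + t2 (j+1) := by
    intro j hj
    have hj' := mem_range.mp hj
    have hp1 : 0 < s (m+1) (j+1) := s_pos (m+1) (by omega) (by omega)
    have hp2 : 0 < s (m+1) (j+2) := s_pos (m+1) (by omega) (by omega)
    rw [ht1, ht2]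
    field_simp
    ring
  rw [Finset.sum_congr rfl e3, e1, e2, h1m, h20]
  rw [Finset.sum_add_distrib, Finset.sum_add_distrib]
  ring


lemma form_eq (n : ℕ) (hn : 1 ≤ n) (α : ℝ) (a : Fin n → ℝ) :
    (jordanBlock n α).mulVec a ⬝ᵥ a
      = α * ∑ j ∈ range n, (b n a j)^2 + ∑ j ∈ range (n-1), b n a j * b n a (j+1) := by
  have hb : ∀ i : Fin n, b n a (i : ℕ) = a i := by
    intro i; simp [b, i.isLt]
  have hbn : b n a n = 0 := by simp [b]
  have hmv : ∀ i : Fin n, (jordanBlock n α).mulVec a i = α * a i + b n a ((i:ℕ)+1) := by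
    intro i
    unfold Matrix.mulVec dotProduct jordanBlock
    simp only [Matrix.of_apply]
    have key : ∀ j : Fin n,
        (if (j:ℕ) = (i:ℕ) then α else if (j:ℕ) = (i:ℕ)+1 then (1:ℝ) else 0) * a j
        = ((if (j:ℕ) = (i:ℕ) then α * b n a (j:ℕ) else 0)
            + (if (j:ℕ) = (i:ℕ)+1 then b n a (j:ℕ) else 0)) := by
      intro j
      rw [hb]
      by_cases h1 : (j:ℕ) = (i:ℕ)
      · have h2 : ¬ ((j:ℕ) = (i:ℕ)+1) := by omega
        rw [if_pos h1, if_pos h1, if_neg h2]; ring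
      · rw [if_neg h1, if_neg h1]
        by_cases h2 : (j:ℕ) = (i:ℕ)+1
        · rw [if_pos h2, if_pos h2]; ring
        · rw [if_neg h2, if_neg h2]; ring
    rw [Finset.sum_congr rfl (fun j _ => key j), Finset.sum_add_distrib]
    rw [Fin.sum_univ_eq_sum_range (fun k => if k = (i:ℕ) then α * b n a k else 0)]
    rw [Fin.sum_univ_eq_sum_range (fun k => if k = (i:ℕ)+1 then b n a k else 0)]
    rw [Finset.sum_ite_eq', Finset.sum_ite_eq']
    rw [if_pos (mem_range.mpr i.isLt), hb]
    by_cases h : (i:ℕ)+1 < n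
    · rw [if_pos (mem_range.mpr h)]
    · rw [if_neg (by rw [mem_range]; omega)]
      have hz : b n a ((i:ℕ)+1) = 0 := by unfold b; rw [dif_neg h]
      rw [hz]
  have hQ : (jordanBlock n α).mulVec a ⬝ᵥ a
      = ∑ k ∈ range n, (α * b n a k + b n a (k+1)) * b n a k := by
    unfold dotProduct
    rw [Finset.sum_congr rfl (fun i _ => by rw [hmv i, ← hb i])]
    exact Fin.sum_univ_eq_sum_range (fun k => (α * b n a k + b n a (k+1)) * b n a k) n
  rw [hQ]
  have expand : ∀ k, (α * b n a k + b n a (k+1)) * b n a k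
      = α * (b n a k)^2 + b n a k * b n a (k+1) := fun k => by ring
  rw [Finset.sum_congr rfl (fun k _ => expand k), Finset.sum_add_distrib, ← Finset.mul_sum]
  congr 1
  obtain ⟨m, rfl⟩ : ∃ m, n = m + 1 := ⟨n - 1, by omega⟩
  rw [Finset.sum_range_succ]
  simp [hbn]

end JBAux


/-- `-J_n(α)` is dissipative iff `α ≥ cos(π/(n+1))`. -/
theorem neg_jordanBlock_dissipative_iff (n : ℕ) (hn : 1 ≤ n) (α : ℝ) :
    (∀ a : Fin n → ℝ, (jordanBlock n α).mulVec a ⬝ᵥ a ≥ 0) ↔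
      α ≥ Real.cos (π / (n + 1)) := by
  constructor
  · intro H
    set a : Fin n → ℝ := fun i => (-1:ℝ)^(i:ℕ) * JBAux.s n ((i:ℕ)+1) with ha
    have hbk : ∀ k < n, JBAux.b n a k = (-1:ℝ)^k * JBAux.s n (k+1) := by
      intro k hk; unfold JBAux.b; rw [dif_pos hk]
    have hQ := JBAux.form_eq n hn α a
    have hkey := JBAux.key n hn (JBAux.b n a)
    have hRHS0 : ∑ j ∈ range (n-1),
        (JBAux.s n (j+2) * JBAux.b n a j + JBAux.s n (j+1) * JBAux.b n a (j+1))^2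
          / (2 * JBAux.s n (j+1) * JBAux.s n (j+2)) = 0 := by
      apply Finset.sum_eq_zero
      intro j hj
      have hj' := mem_range.mp hj
      rw [hbk j (by omega), hbk (j+1) (by omega)]
      have : JBAux.s n (j+2) * ((-1:ℝ)^j * JBAux.s n (j+1))
          + JBAux.s n (j+1) * ((-1:ℝ)^(j+1) * JBAux.s n (j+2)) = 0 := by
        rw [pow_succ]; ring
      rw [this]
      simp
    rw [hRHS0] at hkey
    have hS : 0 < ∑ j ∈ range n, (JBAux.b n a j)^2 := by
      have h0 : (0:ℕ) ∈ range n := mem_range.mpr (by omega)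
      have hle : (JBAux.b n a 0)^2 ≤ ∑ j ∈ range n, (JBAux.b n a j)^2 :=
        Finset.single_le_sum (f := fun j => (JBAux.b n a j)^2) (fun j _ => sq_nonneg _) h0
      have hb0 : JBAux.b n a 0 = JBAux.s n 1 := by
        rw [hbk 0 (by omega)]; simp
      have : 0 < (JBAux.b n a 0)^2 := by
        rw [hb0]; exact pow_pos (JBAux.s_pos n le_rfl hn) 2
      linarith
    have hQ0 := H a
    rw [hQ] at hQ0
    nlinarith [hQ0, hkey, hS]
  · intro hα a
    rw [JBAux.form_eq n hn α a]
    have hkey := JBAux.key n hn (JBAux.b n a)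
    have hS : 0 ≤ ∑ j ∈ range n, (JBAux.b n a j)^2 :=
      Finset.sum_nonneg fun j _ => sq_nonneg _
    have hRHS : 0 ≤ ∑ j ∈ range (n-1),
        (JBAux.s n (j+2) * JBAux.b n a j + JBAux.s n (j+1) * JBAux.b n a (j+1))^2
          / (2 * JBAux.s n (j+1) * JBAux.s n (j+2)) := by
      apply Finset.sum_nonneg
      intro j hj
      have hj' := mem_range.mp hj
      have hp1 : 0 < JBAux.s n (j+1) := JBAux.s_pos n (by omega) (by omega)
      have hp2 : 0 < JBAux.s n (j+2) := JBAux.s_pos n (by omega) (by omega)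
      positivity
    nlinarith [hkey, hS, hRHS, mul_le_mul_of_nonneg_right hα hS]
end

section
/- For every natural number n ≥ 1 and every x ∈ ℝ, det(J̃_n(x)ᵀ + J̃_n(x)) = U_n(x) - U_{n-1}(x), where U_k denotes the k-th Chebyshev polynomial of the second kind. -/
open Real Matrix Polynomial

/-- The `n × n` upper bidiagonal matrix with diagonal entries `x`, except that the
`(n,n)` entry is `x - 1/2`, and `1` on the superdiagonal. -/
noncomputable def jordanBlockMod (n : ℕ) (x : ℝ) : Matrix (Fin n) (Fin n) ℝ :=
  Matrix.of fun i j =>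
    if (j : ℕ) = (i : ℕ) then (if (i : ℕ) = n - 1 then x - 1 / 2 else x)
    else if (j : ℕ) = (i : ℕ) + 1 then 1 else 0

/-! `J̃ₙ(x)ᵀ + J̃ₙ(x)` is the symmetric tridiagonal matrix with `1` off the diagonal
and `2x, …, 2x, 2x - 1` on it. Expanding its determinant `Dₙ` along the first row gives
`Dₙ₊₂ = 2x Dₙ₊₁ - Dₙ`, the recurrence satisfied by `Uₙ` and hence by `Uₙ - Uₙ₋₁`, and the
initial values agree: `D₀ = 1 = U₀ - U₋₁` and `D₁ = 2x - 1 = U₁ - U₀`. -/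

namespace Matrix

variable {R : Type*} [CommRing R]

/-- Expand along the first row, then expand the second minor along its first column. -/
theorem det_succ_succ_of_row_zero_of_col_zero {n : ℕ} (M : Matrix (Fin (n + 2)) (Fin (n + 2)) R)
    (hrow : ∀ j : Fin n, M 0 j.succ.succ = 0) (hcol : ∀ i : Fin n, M i.succ.succ 0 = 0) :
    M.det = M 0 0 * (M.submatrix Fin.succ Fin.succ).det
      - M 0 1 * M 1 0 * ((M.submatrix Fin.succ Fin.succ).submatrix Fin.succ Fin.succ).det := by
  have hminor : (M.submatrix Fin.succ (Fin.succAbove 1)).det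
      = M 1 0 * ((M.submatrix Fin.succ Fin.succ).submatrix Fin.succ Fin.succ).det := by
    rw [det_succ_column_zero, Fin.sum_univ_succ,
      Finset.sum_eq_zero fun i _ => by simp [hcol]]
    simp [submatrix_submatrix, Function.comp_def]
  rw [det_succ_row_zero, Fin.sum_univ_succ, Fin.sum_univ_succ,
    Finset.sum_eq_zero fun j _ => by simp [hrow], Fin.succ_zero_eq_one, hminor]
  simp
  ring

/-- Only the last diagonal entry differs from `a`, so that deleting the first row and column
stays within the family. -/
def tridiagonalLast (n : ℕ) (a b : R) : Matrix (Fin n) (Fin n) R :=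
  of fun i j =>
    if (i : ℕ) = j then (if (i : ℕ) = n - 1 then b else a)
    else if (i : ℕ) + 1 = j ∨ (j : ℕ) + 1 = i then 1 else 0

theorem tridiagonalLast_submatrix_succ (n : ℕ) (a b : R) :
    (tridiagonalLast (n + 1) a b).submatrix Fin.succ Fin.succ = tridiagonalLast n a b := by
  ext i j
  simp only [tridiagonalLast, submatrix_apply, of_apply, Fin.val_succ]
  have := i.isLt
  have := j.isLt
  split_ifs <;> first | rfl | omega

theorem det_tridiagonalLast_add_two (n : ℕ) (a b : R) :
    (tridiagonalLast (n + 2) a b).det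
      = a * (tridiagonalLast (n + 1) a b).det - (tridiagonalLast n a b).det := by
  rw [det_succ_succ_of_row_zero_of_col_zero _ (fun j ↦ by simp [tridiagonalLast])
    (fun i ↦ by simp [tridiagonalLast]), tridiagonalLast_submatrix_succ,
    tridiagonalLast_submatrix_succ]
  simp [tridiagonalLast]

end Matrix

namespace Polynomial.Chebyshev

variable (R : Type*) [CommRing R]

theorem U_sub_U_sub_one_add_two (n : ℤ) :
    U R (n + 2) - U R (n + 2 - 1)
      = 2 * X * (U R (n + 1) - U R (n + 1 - 1)) - (U R n - U R (n - 1)) := by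
  have h := U_add_two R (n - 1)
  rw [show n - 1 + 2 = n + 1 by ring, show n - 1 + 1 = n by ring] at h
  rw [U_add_two, show n + 2 - 1 = n + 1 by ring, show n + 1 - 1 = n by ring, h]
  ring

theorem eval_U_sub_U_sub_one_eq_det_tridiagonalLast (n : ℕ) (x : R) :
    (U R n - U R ((n : ℤ) - 1)).eval x = (tridiagonalLast n (2 * x) (2 * x - 1)).det := by
  induction n using Nat.twoStepInduction with
  | zero => simp
  | one => simp [tridiagonalLast]
  | more n ih₁ ih₂ =>
    rw [det_tridiagonalLast_add_two, ← ih₁, ← ih₂]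
    push_cast
    rw [U_sub_U_sub_one_add_two]
    simp

end Polynomial.Chebyshev

theorem transpose_add_jordanBlockMod (n : ℕ) (x : ℝ) :
    (jordanBlockMod n x)ᵀ + jordanBlockMod n x = tridiagonalLast n (2 * x) (2 * x - 1) := by
  ext i j
  simp only [Matrix.add_apply, transpose_apply, jordanBlockMod, tridiagonalLast, of_apply]
  have := i.isLt
  have := j.isLt
  split_ifs <;> first | ring1 | omega

theorem det_transpose_add_jordanBlockMod_general (n : ℕ) (x : ℝ) :
    ((jordanBlockMod n x)ᵀ + jordanBlockMod n x).det =
      (Polynomial.Chebyshev.U ℝ (n : ℤ)).eval x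
        - (Polynomial.Chebyshev.U ℝ ((n : ℤ) - 1)).eval x := by
  rw [transpose_add_jordanBlockMod, ← eval_sub,
    Polynomial.Chebyshev.eval_U_sub_U_sub_one_eq_det_tridiagonalLast]

/-- `det (J̃_n(x)ᵀ + J̃_n(x)) = U_n(x) - U_{n-1}(x)`, where `U_k` is the `k`-th
Chebyshev polynomial of the second kind. -/
theorem det_transpose_add_jordanBlockMod (n : ℕ) (hn : 1 ≤ n) (x : ℝ) :
    ((jordanBlockMod n x)ᵀ + jordanBlockMod n x).det =
      (Polynomial.Chebyshev.U ℝ (n : ℤ)).eval x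
        - (Polynomial.Chebyshev.U ℝ ((n : ℤ) - 1)).eval x :=
  det_transpose_add_jordanBlockMod_general n x
end

section
/- Let n ≥ 1 and α ∈ ℝ. The matrix J̃_n(α) is dissipative (i.e. ⟨J̃_n(α)a, a⟩ ≤ 0 for all a ∈ ℝⁿ with the Euclidean inner product) if and only if α ≤ -cos(2π/(2n+1)). -/
/-!
With `θ = 2π/(2n+1)` and `s j = sin (j θ)`, the form `⟨J̃_n(α) a, a⟩` equals
`(α + cos θ) ‖a‖² - ∑ (s (i+2) aᵢ - s (i+1) aᵢ₊₁)² / (2 s (i+1) s (i+2))`.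
This is a telescoping identity that only uses `s 0 = 0`, the recurrence
`s j + s (j+2) = 2 cos θ · s (j+1)` and the boundary relation `s (n+1) = -s n`, which is where
the angle `2π/(2n+1)` comes from. Since `s 1, …, s n > 0`, the subtracted sum is nonnegative and
vanishes at `aᵢ = s (i+1)`, so the form is nonpositive exactly when `α + cos θ ≤ 0`.
-/

open Real Matrix

open Finset

theorem sum_sq_sub_sum_mul_succ_eq_of_recurrence {c : ℝ} {s : ℕ → ℝ} (A : ℕ → ℝ) (m : ℕ)
    (hs0 : s 0 = 0) (hrec : ∀ j, s j + s (j + 2) = 2 * c * s (j + 1))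
    (hs : ∀ j ≤ m, s (j + 1) ≠ 0) :
    c * ∑ i ∈ range (m + 1), A i ^ 2 - ∑ i ∈ range m, A i * A (i + 1) =
      ∑ i ∈ range m, (s (i + 2) * A i - s (i + 1) * A (i + 1)) ^ 2 / (2 * s (i + 1) * s (i + 2))
        + s (m + 2) / (2 * s (m + 1)) * A m ^ 2 := by
  induction m with
  | zero =>
    have h1 := hs 0 le_rfl
    have h2 := hrec 0
    simp only [zero_add, hs0] at h1 h2
    simp only [zero_add, range_one, sum_singleton, range_zero, sum_empty, h2]
    field_simp
    ring
  | succ m ih =>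
    have h1 := hs m (by omega)
    have h2 : s (m + 2) ≠ 0 := hs (m + 1) le_rfl
    have step : (s (m + 2) * A m - s (m + 1) * A (m + 1)) ^ 2 / (2 * s (m + 1) * s (m + 2))
        + s (m + 1 + 2) / (2 * s (m + 2)) * A (m + 1) ^ 2 - s (m + 2) / (2 * s (m + 1)) * A m ^ 2
        = c * A (m + 1) ^ 2 - A m * A (m + 1) := by
      field_simp
      linear_combination (s (m + 1) * A (m + 1) ^ 2) * hrec (m + 1)
    rw [sum_range_succ (fun i => A i ^ 2) (m + 1), sum_range_succ (fun i => A i * A (i + 1)) m,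
      sum_range_succ (fun i => (s (i + 2) * A i - s (i + 1) * A (i + 1)) ^ 2
        / (2 * s (i + 1) * s (i + 2))) m]
    linear_combination ih (fun j hj => hs j (by omega)) - step

noncomputable def sinSeq (n j : ℕ) : ℝ := sin (j * (2 * π / (2 * n + 1)))

theorem sinSeq_zero (n : ℕ) : sinSeq n 0 = 0 := by
  simp [sinSeq]

theorem sinSeq_add_sinSeq_add_two (n j : ℕ) :
    sinSeq n j + sinSeq n (j + 2) = 2 * cos (2 * π / (2 * n + 1)) * sinSeq n (j + 1) := by
  rw [sinSeq, sinSeq, sinSeq, Real.sin_add_sin, ← Real.cos_neg]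
  push_cast
  ring_nf

theorem sinSeq_pos {n j : ℕ} (hj0 : 1 ≤ j) (hjn : j ≤ n) : 0 < sinSeq n j := by
  have hj : (1 : ℝ) ≤ j := by exact_mod_cast hj0
  have hjn' : (j : ℝ) ≤ n := by exact_mod_cast hjn
  apply Real.sin_pos_of_pos_of_lt_pi
  · positivity
  · rw [mul_div_assoc', div_lt_iff₀ (by positivity)]
    nlinarith [Real.pi_pos]

theorem sinSeq_succ_self (n : ℕ) : sinSeq n (n + 1) = -sinSeq n n := by
  have : ((n + 1 : ℕ) : ℝ) * (2 * π / (2 * n + 1)) = 2 * π - n * (2 * π / (2 * n + 1)) := by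
    push_cast
    field_simp
    ring
  rw [sinSeq, sinSeq, this, Real.sin_two_pi_sub]

theorem jordanBlockMod_mulVec_apply (n : ℕ) (x : ℝ) (A : ℕ → ℝ) (i : Fin n) :
    (jordanBlockMod n x *ᵥ fun j => A j) i =
      (if (i : ℕ) = n - 1 then x - 1 / 2 else x) * A i +
        if (i : ℕ) + 1 < n then A (i + 1) else 0 := by
  set d := if (i : ℕ) = n - 1 then x - 1 / 2 else x
  have entry (k : ℕ) : (if k = i then d else if k = i + 1 then 1 else 0) * A k =
      (if k = i then d * A k else 0) + if k = i + 1 then A k else 0 := by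
    split_ifs <;> first | omega | ring
  simp only [mulVec, dotProduct, jordanBlockMod, of_apply]
  rw [Fin.sum_univ_eq_sum_range (fun k => (if k = i then d else if k = i + 1 then 1 else 0) * A k),
    sum_congr rfl fun k _ => entry k, sum_add_distrib, sum_ite_eq', sum_ite_eq',
    if_pos (mem_range.2 i.isLt)]
  simp only [mem_range]

theorem jordanBlockMod_mulVec_dotProduct (m : ℕ) (x : ℝ) (A : ℕ → ℝ) :
    (jordanBlockMod (m + 1) x *ᵥ fun j => A j) ⬝ᵥ (fun j => A j) =
      x * ∑ i ∈ range (m + 1), A i ^ 2 - A m ^ 2 / 2 + ∑ i ∈ range m, A i * A (i + 1) := by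
  simp only [dotProduct, jordanBlockMod_mulVec_apply, add_tsub_cancel_right]
  rw [Fin.sum_univ_eq_sum_range (fun i => ((if i = m then x - 1 / 2 else x) * A i +
    if i + 1 < m + 1 then A (i + 1) else 0) * A i), sum_range_succ,
    sum_congr rfl fun i hi => show _ = x * A i ^ 2 + A i * A (i + 1) by
      rw [if_neg (mem_range.1 hi).ne, if_pos (Nat.succ_lt_succ (mem_range.1 hi))]; ring,
    if_pos rfl, if_neg (lt_irrefl _), sum_range_succ, sum_add_distrib, ← mul_sum]
  ring

theorem jordanBlockMod_mulVec_dotProduct_eq_sub_sum_sq (m : ℕ) (x : ℝ) (A : ℕ → ℝ) :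
    (jordanBlockMod (m + 1) x *ᵥ fun j => A j) ⬝ᵥ (fun j => A j) =
      (x + cos (2 * π / (2 * (m + 1 : ℕ) + 1))) * ∑ i ∈ range (m + 1), A i ^ 2 -
        ∑ i ∈ range m, (sinSeq (m + 1) (i + 2) * A i - sinSeq (m + 1) (i + 1) * A (i + 1)) ^ 2 /
          (2 * sinSeq (m + 1) (i + 1) * sinSeq (m + 1) (i + 2)) := by
  have hsum := sum_sq_sub_sum_mul_succ_eq_of_recurrence A m (sinSeq_zero (m + 1))
    (sinSeq_add_sinSeq_add_two (m + 1)) fun j hj => (sinSeq_pos (by omega) (by omega)).ne'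
  have hlast : sinSeq (m + 1) (m + 2) / (2 * sinSeq (m + 1) (m + 1)) = -1 / 2 := by
    have hm : sinSeq (m + 1) (m + 1) ≠ 0 := (sinSeq_pos le_add_self le_rfl).ne'
    rw [sinSeq_succ_self (m + 1)]
    field_simp
  rw [hlast] at hsum
  rw [jordanBlockMod_mulVec_dotProduct]
  linear_combination -hsum

/-- `J̃_n(α)` is dissipative iff `α ≤ -cos(2π/(2n+1))`. -/
theorem jordanBlockMod_dissipative_iff (n : ℕ) (hn : 1 ≤ n) (α : ℝ) :
    (∀ a : Fin n → ℝ, (jordanBlockMod n α).mulVec a ⬝ᵥ a ≤ 0) ↔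
      α ≤ -Real.cos (2 * π / (2 * n + 1)) := by
  obtain ⟨m, rfl⟩ : ∃ m, n = m + 1 := ⟨n - 1, by omega⟩
  constructor
  · intro h
    have hnorm : 0 < ∑ i ∈ range (m + 1), sinSeq (m + 1) (i + 1) ^ 2 :=
      sum_pos (fun i hi => pow_pos (sinSeq_pos (by omega) (mem_range.1 hi)) 2)
        nonempty_range_add_one
    have hform := h fun j => sinSeq (m + 1) (j + 1)
    rw [jordanBlockMod_mulVec_dotProduct_eq_sub_sum_sq m α fun j => sinSeq (m + 1) (j + 1),
      sum_eq_zero (s := range m) fun i _ => by ring, sub_zero] at hform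
    linarith [nonpos_of_mul_nonpos_left hform hnorm]
  · intro h a
    have hweight (i : ℕ) (hi : i ∈ range m) :
        0 < 2 * sinSeq (m + 1) (i + 1) * sinSeq (m + 1) (i + 2) := by
      have := mem_range.1 hi
      exact mul_pos (mul_pos two_pos (sinSeq_pos (by omega) (by omega)))
        (sinSeq_pos (by omega) (by omega))
    obtain ⟨A, rfl⟩ : ∃ A : ℕ → ℝ, a = fun j : Fin (m + 1) => A j :=
      ⟨Function.extend Fin.val a 0, funext fun j => (Fin.val_injective.extend_apply a 0 j).symm⟩
    rw [jordanBlockMod_mulVec_dotProduct_eq_sub_sum_sq]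
    exact sub_nonpos.2 <| (mul_nonpos_of_nonpos_of_nonneg (by linarith)
      (sum_nonneg fun i _ => sq_nonneg (A i))).trans
        (sum_nonneg fun i hi => div_nonneg (sq_nonneg _) (hweight i hi).le)
end

section
/- Let Q be a real n×n matrix. The following are equivalent: (i) for every x ≥ 0, the operator norm (with respect to the Euclidean norm on ℝⁿ) of the matrix exponential exp(Qx) is at most 1; (ii) Q is dissipative, i.e. ⟨Qa, a⟩ ≤ 0 for all a ∈ ℝⁿ with the Euclidean inner product. -/
/-!
Along an orbit, `t ↦ ‖exp (t • A) a‖ ^ 2` has derivative `2 ⟪A (exp (t • A) a), exp (t • A) a⟫`.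
If `A` is dissipative this is nonpositive, so the orbit norm decreases and `exp (t • A)` is a
contraction for `t ≥ 0`. Conversely, if every `exp (t • A)` with `t ≥ 0` is a contraction, then
`t = 0` maximizes the orbit norm on `[0, ∞)`, so the one-sided derivative `2 ⟪A a, a⟫` there is
nonpositive. The matrix statement is the case `A = toEuclideanCLM Q`, since this star algebra
isomorphism is isometric for the L² operator norm and commutes with `exp`.
-/

open Matrix NormedSpace InnerProductSpace
open scoped Matrix.Norms.L2Operator

namespace ContinuousLinearMap

variable {E : Type*} [NormedAddCommGroup E] [InnerProductSpace ℝ E] [CompleteSpace E]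

def IsDissipative (A : E →L[ℝ] E) : Prop := ∀ a, ⟪A a, a⟫_ℝ ≤ 0

theorem hasDerivAt_norm_sq_exp_smul_apply (A : E →L[ℝ] E) (a : E) (t : ℝ) :
    HasDerivAt (fun s : ℝ => ‖exp (s • A) a‖ ^ 2)
      (2 * ⟪A (exp (t • A) a), exp (t • A) a⟫_ℝ) t := by
  have h := ((hasDerivAt_exp_smul_const' (𝕂 := ℝ) A t).clm_apply (hasDerivAt_const t a)).norm_sq
  simpa [real_inner_comm] using h

theorem IsDissipative.norm_exp_smul_le_one {A : E →L[ℝ] E} (hA : A.IsDissipative) {t : ℝ}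
    (ht : 0 ≤ t) : ‖exp (t • A)‖ ≤ 1 := by
  refine opNorm_le_bound _ zero_le_one fun a => ?_
  have hanti : Antitone fun s : ℝ => ‖exp (s • A) a‖ ^ 2 :=
    antitone_of_hasDerivAt_nonpos (hasDerivAt_norm_sq_exp_smul_apply A a)
      fun s => mul_nonpos_of_nonneg_of_nonpos zero_le_two (hA _)
  have h := hanti ht
  simp only [zero_smul, exp_zero] at h
  rw [one_mul]
  exact (pow_le_pow_iff_left₀ (norm_nonneg _) (norm_nonneg _) two_ne_zero).mp h

theorem isDissipative_of_norm_exp_smul_le_one {A : E →L[ℝ] E}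
    (hA : ∀ t : ℝ, 0 ≤ t → ‖exp (t • A)‖ ≤ 1) : A.IsDissipative := by
  intro a
  have hmax : IsMaxOn (fun s : ℝ => ‖exp (s • A) a‖ ^ 2) (Set.Ici 0) 0 := fun s hs => by
    simp only [Set.mem_ofPred_eq, zero_smul, exp_zero]
    gcongr
    simpa using le_of_opNorm_le _ (hA s hs) a
  have hcone : (1 : ℝ) ∈ posTangentConeAt (Set.Ici 0) 0 :=
    mem_posTangentConeAt_of_segment_subset (by simp [segment_eq_Icc, Set.Icc_subset_Ici_self])
  have h := hmax.localize.hasFDerivWithinAt_nonpos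
    (hasDerivAt_norm_sq_exp_smul_apply A a 0).hasFDerivAt.hasFDerivWithinAt hcone
  simp only [zero_smul, exp_zero] at h
  exact nonpos_of_mul_nonpos_right (by simpa using h) two_pos

theorem norm_exp_smul_le_one_iff_isDissipative (A : E →L[ℝ] E) :
    (∀ t : ℝ, 0 ≤ t → ‖exp (t • A)‖ ≤ 1) ↔ A.IsDissipative :=
  ⟨isDissipative_of_norm_exp_smul_le_one, fun hA _ => hA.norm_exp_smul_le_one⟩

end ContinuousLinearMap

namespace Matrix

variable {n 𝕜 : Type*} [Fintype n] [DecidableEq n] [RCLike 𝕜]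

theorem continuous_toEuclideanCLM : Continuous (toEuclideanCLM (n := n) (𝕜 := 𝕜)) :=
  LinearMap.continuous_of_finiteDimensional
    (toEuclideanCLM (n := n) (𝕜 := 𝕜)).toAlgEquiv.toLinearMap

theorem toEuclideanCLM_exp (Q : Matrix n n 𝕜) :
    toEuclideanCLM (𝕜 := 𝕜) (exp Q) = exp (toEuclideanCLM (𝕜 := 𝕜) Q) :=
  map_exp_of_mem_ball (𝕂 := 𝕜) toEuclideanCLM continuous_toEuclideanCLM Q <| by
    simp [expSeries_radius_eq_top]

theorem isDissipative_toEuclideanCLM_iff (Q : Matrix n n ℝ) :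
    (toEuclideanCLM (𝕜 := ℝ) Q).IsDissipative ↔ ∀ a : n → ℝ, Q *ᵥ a ⬝ᵥ a ≤ 0 := by
  refine (WithLp.equiv 2 (n → ℝ)).forall_congr fun a => ?_
  simp [real_inner_comm, inner_toEuclideanCLM, dotProduct_comm]

end Matrix

/-- Lumer–Phillips theorem for matrices: the semigroup `exp(Qx)` is contractive in the
Euclidean operator norm for all `x ≥ 0` iff `Q` is dissipative. -/
theorem lumer_phillips (n : ℕ) (Q : Matrix (Fin n) (Fin n) ℝ) :
    (∀ x : ℝ, 0 ≤ x → ‖NormedSpace.exp (x • Q)‖ ≤ 1) ↔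
      (∀ a : Fin n → ℝ, Q.mulVec a ⬝ᵥ a ≤ 0) := by
  rw [← isDissipative_toEuclideanCLM_iff,
    ← ContinuousLinearMap.norm_exp_smul_le_one_iff_isDissipative]
  simp only [← l2_opNorm_toEuclideanCLM, toEuclideanCLM_exp, map_smul]
end

section
/- Let Q be a real n×n matrix such that the operator norm (with respect to the Euclidean norm on ℝⁿ) of exp(Qx) is at most 1 for all x ≥ 0. If there exists x_0 > 0 with ‖exp(Q x_0)‖_op = 1, then ‖exp(Qx)‖_op = 1 for all x ≥ 0. -/
/-!
Pick a unit-ball vector `v` at which `exp (x₀ Q)` attains its norm `1`. Since `t ↦ ‖exp (t Q) v‖`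
is non-increasing on `[0, ∞)` (the semigroup is contractive), it equals `1` on `[0, x₀]`. Its square
is real analytic in `t`, so it equals `1` for every `t`, whence `‖exp (t Q)‖ ≥ 1`.
-/

open Real Matrix NormedSpace Metric Set
open scoped Matrix.Norms.L2Operator

section ExpSMul

variable {𝕜 𝔸 : Type*} [RCLike 𝕜] [NormedRing 𝔸] [NormedAlgebra 𝕜 𝔸] [CompleteSpace 𝔸]

theorem NormedSpace.exp_add_smul (a : 𝔸) (s t : 𝕜) :
    exp ((s + t) • a) = exp (s • a) * exp (t • a) := by
  have hball (x : 𝔸) : x ∈ eball (0 : 𝔸) (expSeries 𝕜 𝔸).radius := by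
    simp [expSeries_radius_eq_top]
  rw [add_smul]
  exact exp_add_of_commute_of_mem_ball (((Commute.refl a).smul_left s).smul_right t)
    (hball _) (hball _)

theorem NormedSpace.analyticAt_exp_smul (a : 𝔸) (t : 𝕜) :
    AnalyticAt 𝕜 (fun s : 𝕜 => exp (s • a)) t :=
  (exp_analytic (t • a)).comp (g := exp) (f := fun s : 𝕜 => s • a)
    (analyticAt_id.smul analyticAt_const)

end ExpSMul

theorem AnalyticAt.norm_sq {E F : Type*} [NormedAddCommGroup E] [NormedSpace ℝ E]
    [NormedAddCommGroup F] [InnerProductSpace ℝ F] {f : E → F} {x : E}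
    (hf : AnalyticAt ℝ f x) : AnalyticAt ℝ (fun y => ‖f y‖ ^ 2) x := by
  have h := ((innerSL ℝ (E := F)).analyticAt_bilinear (f x, f x)).comp₂ hf hf
  convert h using 2 with y
  exact (real_inner_self_eq_norm_sq _).symm

theorem ContinuousLinearMap.exists_norm_le_one_norm_apply_eq_opNorm {𝕜 E F : Type*}
    [DenselyNormedField 𝕜] [NormedAddCommGroup E] [NormedSpace 𝕜 E] [ProperSpace E]
    [NormedAddCommGroup F] [NormedSpace 𝕜 F] (f : E →L[𝕜] F) :
    ∃ x, ‖x‖ ≤ 1 ∧ ‖f x‖ = ‖f‖ := by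
  have hmem :=
    ((isCompact_closedBall (0 : E) 1).image (f := fun x => ‖f x‖) (by fun_prop)).sSup_mem
      ((nonempty_closedBall.2 zero_le_one).image _)
  rw [f.sSup_unitClosedBall_eq_norm] at hmem
  obtain ⟨x, hx, hfx⟩ := hmem
  exact ⟨x, mem_closedBall_zero_iff.1 hx, hfx⟩

theorem ContinuousLinearMap.antitoneOn_norm_exp_smul_apply {E : Type*} [NormedAddCommGroup E]
    [NormedSpace ℝ E] [CompleteSpace E] {A : E →L[ℝ] E}
    (hA : ∀ t : ℝ, 0 ≤ t → ‖exp (t • A)‖ ≤ 1) (v : E) :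
    AntitoneOn (fun t : ℝ => ‖exp (t • A) v‖) (Ici 0) := by
  intro s _ t _ hst
  have hsplit := exp_add_smul A (t - s) s
  rw [sub_add_cancel] at hsplit
  calc ‖exp (t • A) v‖ = ‖exp ((t - s) • A) (exp (s • A) v)‖ := by rw [hsplit]; rfl
    _ ≤ ‖exp ((t - s) • A)‖ * ‖exp (s • A) v‖ := le_opNorm _ _
    _ ≤ ‖exp (s • A) v‖ := mul_le_of_le_one_left (norm_nonneg _) (hA _ (sub_nonneg.2 hst))

theorem ContinuousLinearMap.norm_exp_smul_eq_one_of_eq_one {E : Type*} [NormedAddCommGroup E]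
    [InnerProductSpace ℝ E] [FiniteDimensional ℝ E] {A : E →L[ℝ] E}
    (hA : ∀ t : ℝ, 0 ≤ t → ‖exp (t • A)‖ ≤ 1) {x₀ : ℝ} (hx₀ : 0 < x₀)
    (hA₁ : ‖exp (x₀ • A)‖ = 1) {t : ℝ} (ht : 0 ≤ t) : ‖exp (t • A)‖ = 1 := by
  obtain ⟨v, hv, hv₁⟩ := (exp (x₀ • A)).exists_norm_le_one_norm_apply_eq_opNorm
  rw [hA₁] at hv₁
  have hanti := antitoneOn_norm_exp_smul_apply hA v
  have hIcc : ∀ s ∈ Icc 0 x₀, ‖exp (s • A) v‖ ^ 2 = 1 := by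
    rintro s ⟨hs₀, hsx₀⟩
    have hge : 1 ≤ ‖exp (s • A) v‖ := hv₁ ▸ hanti hs₀ hx₀.le hsx₀
    have hle : ‖exp (s • A) v‖ ≤ 1 := by
      simpa using (hanti self_mem_Ici hs₀ hs₀).trans (by simpa using hv)
    rw [le_antisymm hle hge, one_pow]
  have hall : (fun s : ℝ => ‖exp (s • A) v‖ ^ 2) = fun _ => 1 := by
    refine AnalyticOnNhd.eq_of_eventuallyEq (z₀ := x₀ / 2)
      (fun s _ => (((apply ℝ E v).analyticAt _).comp (analyticAt_exp_smul A s)).norm_sq)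
      analyticOnNhd_const ?_
    filter_upwards [Ioo_mem_nhds (half_pos hx₀) (half_lt_self hx₀)] with s hs
    exact hIcc s (Ioo_subset_Icc_self hs)
  have hvt : ‖exp (t • A) v‖ = 1 :=
    (pow_eq_one_iff_of_nonneg (norm_nonneg _) two_ne_zero).1 (congrFun hall t)
  refine le_antisymm (hA t ht) ?_
  simpa [hvt] using (exp (t • A)).le_opNorm_of_le hv

theorem Matrix.toEuclideanCLM_exp_s16 {𝕜 n : Type*} [RCLike 𝕜] [Fintype n] [DecidableEq n]
    (A : Matrix n n 𝕜) :
    toEuclideanCLM (n := n) (𝕜 := 𝕜) (exp A) = exp (toEuclideanCLM (n := n) (𝕜 := 𝕜) A) :=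
  map_exp_of_mem_ball (𝕂 := 𝕜) _
    (AddMonoidHomClass.isometry_of_norm _ fun _ => (cstar_norm_def _).symm).continuous A
    (by simp [expSeries_radius_eq_top])

/-- If `‖exp(Qx)‖ ≤ 1` for all `x ≥ 0` (Euclidean operator norm) and `‖exp(Qx₀)‖ = 1`
for some `x₀ > 0`, then `‖exp(Qx)‖ = 1` for all `x ≥ 0`. -/
theorem norm_exp_eq_one_of_eq_one (n : ℕ) (Q : Matrix (Fin n) (Fin n) ℝ)
    (h : ∀ x : ℝ, 0 ≤ x → ‖NormedSpace.exp (x • Q)‖ ≤ 1)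
    (hx0 : ∃ x0 : ℝ, 0 < x0 ∧ ‖NormedSpace.exp (x0 • Q)‖ = 1) :
    ∀ x : ℝ, 0 ≤ x → ‖NormedSpace.exp (x • Q)‖ = 1 := by
  obtain ⟨x0, hx0, hx01⟩ := hx0
  have hnorm (t : ℝ) : ‖exp (t • Q)‖ = ‖exp (t • toEuclideanCLM (𝕜 := ℝ) Q)‖ := by
    rw [cstar_norm_def, toEuclideanCLM_exp_s16, map_smul (toEuclideanCLM (n := Fin n) (𝕜 := ℝ))]
  simp only [hnorm] at h hx01 ⊢
  exact fun x hx => ContinuousLinearMap.norm_exp_smul_eq_one_of_eq_one h hx0 hx01 hx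
end

section
/- Let Q be a real n×n matrix such that the operator norm (with respect to the Euclidean norm on ℝⁿ) of exp(Qx) is at most 1 for all x ≥ 0. Then the set W_Q := { a ∈ ℝⁿ : ‖exp(Qx)a‖ = ‖a‖ for all x ≥ 0 } is a linear subspace of ℝⁿ, and both W_Q and its orthogonal complement W_Q^⊥ are invariant under exp(Qx) for every x ≥ 0. -/
/-!
For a contraction `T`, `‖T a‖ = ‖a‖` holds exactly when `T† T a = a`, so `W_Q` is the
intersection of the kernels of `T_x† T_x - 1` over `x ≥ 0`, where `T_x = exp (x Q)`; in particular
it is a subspace. The semigroup law `T_{y+x} = T_y T_x` makes it `T_x`-invariant. On the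
finite-dimensional `W_Q` each `T_x` is an isometry, hence onto, so every `w ∈ W_Q` is some `T_x w'`,
and for `b ⊥ W_Q` we get `⟪w, T_x b⟫ = ⟪T_x† T_x w', b⟫ = ⟪w', b⟫ = 0`.
-/

open Matrix
open scoped Matrix.Norms.L2Operator InnerProductSpace

namespace ContinuousLinearMap

variable {𝕜 E F : Type*} [RCLike 𝕜] [NormedAddCommGroup E] [InnerProductSpace 𝕜 E] [CompleteSpace E]
  [NormedAddCommGroup F] [InnerProductSpace 𝕜 F] [CompleteSpace F]

theorem norm_map_eq_iff_adjoint_apply_apply {T : E →L[𝕜] F} (hT : ‖T‖ ≤ 1) {a : E} :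
    ‖T a‖ = ‖a‖ ↔ adjoint T (T a) = a := by
  have hinner : RCLike.re ⟪adjoint T (T a), a⟫_𝕜 = ‖T a‖ ^ 2 := by
    rw [adjoint_inner_left, inner_self_eq_norm_sq]
  constructor
  · intro ha
    have hle : ‖adjoint T (T a)‖ ≤ ‖a‖ :=
      calc ‖adjoint T (T a)‖ ≤ ‖adjoint T‖ * ‖T a‖ := le_opNorm _ _
        _ ≤ 1 * ‖a‖ := by rw [LinearIsometryEquiv.norm_map, ha]; gcongr
        _ = ‖a‖ := one_mul _
    -- `‖T† T a - a‖² = ‖T† T a‖² - 2 re ⟪T† T a, a⟫ + ‖a‖² = ‖T† T a‖² - ‖a‖²`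
    have hsq : ‖adjoint T (T a) - a‖ ^ 2 ≤ 0 := by
      rw [norm_sub_sq (𝕜 := 𝕜), hinner, ha]
      nlinarith [norm_nonneg (adjoint T (T a))]
    exact sub_eq_zero.mp (norm_eq_zero.mp (by nlinarith [norm_nonneg (adjoint T (T a) - a)]))
  · intro ha
    rw [ha, inner_self_eq_norm_sq] at hinner
    exact (pow_left_inj₀ (norm_nonneg _) (norm_nonneg _) two_ne_zero).mp hinner.symm

variable {K : Submodule 𝕜 E}

theorem mapsTo_orthogonal_of_adjoint_apply_apply [FiniteDimensional 𝕜 K] {T : E →L[𝕜] E}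
    (hK : Set.MapsTo T K K) (hT : ∀ a ∈ K, adjoint T (T a) = a) : Set.MapsTo T Kᗮ Kᗮ := by
  have hinj : Function.Injective ((T : E →ₗ[𝕜] E).restrict hK) := fun a b hab =>
    Subtype.ext (by rw [← hT a a.2, ← hT b b.2]; exact congrArg (adjoint T ∘ Subtype.val) hab)
  intro b hb w hw
  -- `T` is an isometry of the finite-dimensional `K` into itself, hence onto `K`.
  obtain ⟨w', hw'⟩ := LinearMap.injective_iff_surjective.mp hinj ⟨w, hw⟩
  have hTw' : T w' = w := congrArg Subtype.val hw'
  rw [← hTw', ← adjoint_inner_left, hT w' w'.2]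
  exact hb w' w'.2

end ContinuousLinearMap

section ContractionSemigroup

open ContinuousLinearMap

variable {𝕜 E : Type*} [RCLike 𝕜] [NormedAddCommGroup E] [InnerProductSpace 𝕜 E] [CompleteSpace E]
  {T : ℝ → E →L[𝕜] E}

noncomputable def isometricSubmodule (T : ℝ → E →L[𝕜] E) : Submodule 𝕜 E :=
  ⨅ (x : ℝ) (_ : 0 ≤ x), (adjoint (T x) ∘L T x - .id 𝕜 E).ker

theorem mem_isometricSubmodule_iff (hT : ∀ x, 0 ≤ x → ‖T x‖ ≤ 1) {a : E} :
    a ∈ isometricSubmodule T ↔ ∀ x, 0 ≤ x → ‖T x a‖ = ‖a‖ := by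
  simp only [isometricSubmodule, Submodule.mem_iInf, LinearMap.mem_ker, coe_coe, _root_.sub_apply,
    id_apply, sub_eq_zero]
  exact forall₂_congr fun x hx => (norm_map_eq_iff_adjoint_apply_apply (hT x hx)).symm

variable (hmul : ∀ x y, 0 ≤ x → 0 ≤ y → T (x + y) = T x * T y) (hT : ∀ x, 0 ≤ x → ‖T x‖ ≤ 1)
include hmul hT

theorem mapsTo_isometricSubmodule {x : ℝ} (hx : 0 ≤ x) :
    Set.MapsTo (T x) (isometricSubmodule T) (isometricSubmodule T) := by
  intro a ha
  rw [SetLike.mem_coe, mem_isometricSubmodule_iff hT] at ha ⊢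
  intro y hy
  calc ‖T y (T x a)‖ = ‖T (y + x) a‖ := by rw [hmul y x hy hx]; rfl
    _ = ‖T x a‖ := by rw [ha _ (add_nonneg hy hx), ha x hx]

theorem mapsTo_orthogonal_isometricSubmodule [FiniteDimensional 𝕜 E] {x : ℝ} (hx : 0 ≤ x) :
    Set.MapsTo (T x) (isometricSubmodule T)ᗮ (isometricSubmodule T)ᗮ :=
  mapsTo_orthogonal_of_adjoint_apply_apply (mapsTo_isometricSubmodule hmul hT hx) fun _ ha =>
    (norm_map_eq_iff_adjoint_apply_apply (hT x hx)).mp ((mem_isometricSubmodule_iff hT).mp ha x hx)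

end ContractionSemigroup

theorem Matrix.toEuclideanCLM_exp_add_smul {n : ℕ} (Q : Matrix (Fin n) (Fin n) ℝ) (x y : ℝ) :
    toEuclideanCLM (𝕜 := ℝ) (NormedSpace.exp ((x + y) • Q)) =
      toEuclideanCLM (𝕜 := ℝ) (NormedSpace.exp (x • Q)) *
        toEuclideanCLM (𝕜 := ℝ) (NormedSpace.exp (y • Q)) := by
  rw [add_smul, Matrix.exp_add_of_commute _ _ ((Commute.refl Q).smul_left x |>.smul_right y),
    map_mul]

/-- If `‖exp(Qx)‖ ≤ 1` for all `x ≥ 0` (Euclidean operator norm), then the set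
`W_Q = { a : ‖exp(Qx)a‖ = ‖a‖ for all x ≥ 0 }` is a linear subspace, and both `W_Q`
and its orthogonal complement are invariant under `exp(Qx)` for every `x ≥ 0`. -/
theorem exists_submodule_norm_exp_eq (n : ℕ) (Q : Matrix (Fin n) (Fin n) ℝ)
    (h : ∀ x : ℝ, 0 ≤ x → ‖NormedSpace.exp (x • Q)‖ ≤ 1) :
    ∃ W : Submodule ℝ (EuclideanSpace ℝ (Fin n)),
      (∀ a : EuclideanSpace ℝ (Fin n), a ∈ W ↔
        ∀ x : ℝ, 0 ≤ x →
          ‖Matrix.toEuclideanCLM (𝕜 := ℝ) (NormedSpace.exp (x • Q)) a‖ = ‖a‖) ∧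
      (∀ x : ℝ, 0 ≤ x → ∀ a ∈ W,
        Matrix.toEuclideanCLM (𝕜 := ℝ) (NormedSpace.exp (x • Q)) a ∈ W) ∧
      (∀ x : ℝ, 0 ≤ x → ∀ a ∈ Wᗮ,
        Matrix.toEuclideanCLM (𝕜 := ℝ) (NormedSpace.exp (x • Q)) a ∈ Wᗮ) := by
  have hmul : ∀ x y : ℝ, 0 ≤ x → 0 ≤ y → _ := fun x y _ _ => Q.toEuclideanCLM_exp_add_smul x y
  -- `h` is the contraction hypothesis as is: `Matrix.cstar_norm_def` holds by `rfl`.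
  exact ⟨isometricSubmodule fun x => toEuclideanCLM (𝕜 := ℝ) (NormedSpace.exp (x • Q)),
    fun _ => mem_isometricSubmodule_iff h, fun _ hx => mapsTo_isometricSubmodule hmul h hx,
    fun _ hx => mapsTo_orthogonal_isometricSubmodule hmul h hx⟩
end

section
/- For every natural number n ≥ 1, real numbers a_1, ..., a_n not all zero, x > 0, and α > cos(π/(n+1)), we have the strict inequality ∑_{j=0}^{n-1} ( ∑_{k=0}^{j} (x^k / k!) · a_{n-j+k} )² < e^{2xα} · ∑_{j=1}^{n} a_j². -/
open Real Finset
open scoped Nat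

/-!
Let `u(t) = exp (t S) a`, where `S` is the truncated shift `(S v)_j = v_(j+1)` on `v_1, …, v_n`; the
inner sums of the left-hand side are the coordinates of `u(x)`, read backwards. The energy
`F = ∑ u_j²` satisfies `F' = 2 ∑ u_j u_(j+1) ≤ 2 cos(π/(n+1)) F` by the Fan–Taussky–Todd
inequality, so `F(x) ≤ e^(2 x cos(π/(n+1))) F(0)` by Grönwall, and `F(0) = ∑ a_j² > 0` makes the
passage to `α` strict. The Fan–Taussky–Todd inequality follows by ground-state substitution from
the positive solution `s_j = sin(jπ/(n+1))` of `s_(j-1) + s_(j+1) = 2 cos(π/(n+1)) s_j`,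
`s_0 = s_(n+1) = 0`.
-/

lemma two_mul_mul_le_div_mul_sq_add_div_mul_sq {r s : ℝ} (hr : 0 < r) (hs : 0 < s) (p q : ℝ) :
    2 * (p * q) ≤ s / r * p ^ 2 + r / s * q ^ 2 := by
  have key : s / r * p ^ 2 + r / s * q ^ 2 - 2 * (p * q) = (s * p - r * q) ^ 2 / (r * s) := by
    field_simp
    ring
  have : 0 ≤ (s * p - r * q) ^ 2 / (r * s) := by positivity
  linarith

lemma sum_Icc_one_comp_succ {M : Type*} [AddCommGroup M] (g : ℕ → M) (n : ℕ) :
    ∑ j ∈ Icc 1 n, g (j + 1) = ∑ j ∈ Icc 1 n, g j + g (n + 1) - g 1 := by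
  induction n with
  | zero => simp
  | succ n ih =>
    rw [sum_Icc_succ_top (by omega), sum_Icc_succ_top (by omega), ih]
    abel

theorem sum_mul_succ_le_of_pos_solution {n : ℕ} {c : ℝ} (s v : ℕ → ℝ) (hs₀ : s 0 = 0)
    (hsₙ : s (n + 1) = 0) (hpos : ∀ j ∈ Icc 1 n, 0 < s j)
    (hrec : ∀ j ∈ Icc 1 n, s (j - 1) + s (j + 1) = 2 * c * s j) (hv : v (n + 1) = 0) :
    ∑ j ∈ Icc 1 n, v j * v (j + 1) ≤ c * ∑ j ∈ Icc 1 n, v j ^ 2 := by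
  have hterm : ∀ j ∈ Icc 1 n,
      2 * (v j * v (j + 1)) ≤ s (j + 1) / s j * v j ^ 2 + s j / s (j + 1) * v (j + 1) ^ 2 := by
    intro j hj
    rcases (mem_Icc.1 hj).2.lt_or_eq with hlt | rfl
    · exact two_mul_mul_le_div_mul_sq_add_div_mul_sq (hpos j hj)
        (hpos (j + 1) (mem_Icc.2 ⟨by omega, hlt⟩)) _ _
    · simp [hv, hsₙ]
  have hshift : ∑ j ∈ Icc 1 n, s j / s (j + 1) * v (j + 1) ^ 2 =
      ∑ j ∈ Icc 1 n, s (j - 1) / s j * v j ^ 2 := by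
    have h := sum_Icc_one_comp_succ (fun j ↦ s (j - 1) / s j * v j ^ 2) n
    simp only [Nat.add_sub_cancel, Nat.sub_self, hs₀, hv] at h
    simpa using h
  have hdiag : ∀ j ∈ Icc 1 n,
      s (j + 1) / s j * v j ^ 2 + s (j - 1) / s j * v j ^ 2 = 2 * c * v j ^ 2 := by
    intro j hj
    rw [← add_mul, ← add_div, add_comm, hrec j hj, mul_div_cancel_right₀ _ (hpos j hj).ne']
  suffices 2 * ∑ j ∈ Icc 1 n, v j * v (j + 1) ≤ 2 * (c * ∑ j ∈ Icc 1 n, v j ^ 2) by linarith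
  calc 2 * ∑ j ∈ Icc 1 n, v j * v (j + 1)
      = ∑ j ∈ Icc 1 n, 2 * (v j * v (j + 1)) := mul_sum _ _ _
    _ ≤ ∑ j ∈ Icc 1 n, (s (j + 1) / s j * v j ^ 2 + s j / s (j + 1) * v (j + 1) ^ 2) :=
      sum_le_sum hterm
    _ = ∑ j ∈ Icc 1 n, (s (j + 1) / s j * v j ^ 2 + s (j - 1) / s j * v j ^ 2) := by
      rw [sum_add_distrib, hshift, sum_add_distrib]
    _ = ∑ j ∈ Icc 1 n, 2 * c * v j ^ 2 := sum_congr rfl hdiag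
    _ = 2 * (c * ∑ j ∈ Icc 1 n, v j ^ 2) := by rw [← mul_sum, mul_assoc]

theorem sum_mul_succ_le_cos_mul_sum_sq (n : ℕ) (v : ℕ → ℝ) (hv : v (n + 1) = 0) :
    ∑ j ∈ Icc 1 n, v j * v (j + 1) ≤ cos (π / (n + 1)) * ∑ j ∈ Icc 1 n, v j ^ 2 := by
  set θ := π / (n + 1) with hθ_def
  have hθ : ((n : ℝ) + 1) * θ = π := by
    rw [hθ_def]
    field_simp
  refine sum_mul_succ_le_of_pos_solution (fun j ↦ sin (j * θ)) v (by simp) ?_ ?_ ?_ hv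
  · simp [hθ]
  · intro j hj
    have hj' : (1 : ℝ) ≤ j ∧ (j : ℝ) ≤ n := by exact_mod_cast mem_Icc.1 hj
    apply sin_pos_of_pos_of_lt_pi
    · have : 0 < θ := by positivity
      nlinarith
    · nlinarith [pi_pos]
  · intro j hj
    simp only [Nat.cast_sub (mem_Icc.1 hj).1, Nat.cast_add, Nat.cast_one, sub_mul, add_mul,
      one_mul, sin_sub, sin_add]
    ring

/-- The `j`-th coordinate of `exp (t S) a` for the truncated shift `(S v)_j = v_(j+1)` on
`v_1, …, v_n`; it vanishes for `j > n`. -/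
noncomputable def expShift (n : ℕ) (a : ℕ → ℝ) (t : ℝ) (j : ℕ) : ℝ :=
  ∑ k ∈ range (n + 1 - j), t ^ k / k ! * a (j + k)

lemma expShift_succ_self (n : ℕ) (a : ℕ → ℝ) (t : ℝ) : expShift n a t (n + 1) = 0 := by
  simp [expShift]

lemma expShift_zero (n : ℕ) (a : ℕ → ℝ) {j : ℕ} (hj : j ≤ n) : expShift n a 0 j = a j := by
  rw [expShift, show n + 1 - j = n - j + 1 by omega, sum_range_succ']
  simp

lemma hasDerivAt_expShift (n : ℕ) (a : ℕ → ℝ) (j : ℕ) (t : ℝ) :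
    HasDerivAt (fun t ↦ expShift n a t j) (expShift n a t (j + 1)) t := by
  rcases lt_or_ge n j with hnj | hjn
  · simp only [expShift, show n + 1 - j = 0 by omega, show n + 1 - (j + 1) = 0 by omega,
      sum_range_zero]
    exact hasDerivAt_const t 0
  obtain ⟨m, rfl⟩ : ∃ m, n = j + m := ⟨n - j, by omega⟩
  simp only [expShift, show j + m + 1 - j = m + 1 by omega, show j + m + 1 - (j + 1) = m by omega]
  have hd := HasDerivAt.fun_sum (u := range (m + 1)) (fun k _ ↦
    ((hasDerivAt_pow k t).div_const (k ! : ℝ)).mul_const (a (j + k)))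
  refine hd.congr_deriv ?_
  rw [sum_range_succ']
  simp only [CharP.cast_eq_zero, zero_mul, zero_div, add_zero]
  refine sum_congr rfl fun k _ ↦ ?_
  rw [Nat.factorial_succ, Nat.cast_mul, Nat.add_sub_cancel, add_right_comm, add_assoc]
  field_simp

theorem le_exp_mul_mul_of_hasDerivAt_le_mul {f f' : ℝ → ℝ} {K x : ℝ}
    (hf : ∀ t, HasDerivAt f (f' t) t) (hf' : ∀ t, f' t ≤ K * f t) (hx : 0 ≤ x) :
    f x ≤ exp (K * x) * f 0 := by
  have := le_gronwallBound_of_liminf_deriv_right_le (f := f) (δ := f 0) (ε := 0) (b := x)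
    (continuous_iff_continuousAt.2 fun t ↦ (hf t).continuousAt).continuousOn
    (fun t _ _ hr ↦ (hf t).hasDerivWithinAt.liminf_right_slope_le hr) le_rfl
    (fun t _ ↦ by simpa using hf' t) x ⟨hx, le_rfl⟩
  rwa [sub_zero, gronwallBound_ε0, mul_comm] at this

theorem sum_sq_expShift_le (n : ℕ) (a : ℕ → ℝ) {x : ℝ} (hx : 0 ≤ x) :
    ∑ j ∈ Icc 1 n, expShift n a x j ^ 2 ≤
      exp (2 * cos (π / (n + 1)) * x) * ∑ j ∈ Icc 1 n, a j ^ 2 := by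
  have hF : ∀ t, HasDerivAt (fun t ↦ ∑ j ∈ Icc 1 n, expShift n a t j ^ 2)
      (∑ j ∈ Icc 1 n, 2 * expShift n a t j * expShift n a t (j + 1)) t := fun t ↦
    HasDerivAt.fun_sum fun j _ ↦ by simpa using (hasDerivAt_expShift n a j t).fun_pow 2
  have hF' (t : ℝ) : ∑ j ∈ Icc 1 n, 2 * expShift n a t j * expShift n a t (j + 1) ≤
      2 * cos (π / (n + 1)) * ∑ j ∈ Icc 1 n, expShift n a t j ^ 2 := by
    simp only [mul_assoc, ← mul_sum]
    gcongr
    exact sum_mul_succ_le_cos_mul_sum_sq n _ (expShift_succ_self n a t)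
  convert le_exp_mul_mul_of_hasDerivAt_le_mul hF hF' hx using 2
  exact sum_congr rfl fun j hj ↦ by rw [expShift_zero n a (mem_Icc.1 hj).2]

lemma sum_range_sq_eq_sum_sq_expShift (n : ℕ) (a : ℕ → ℝ) (x : ℝ) :
    ∑ j ∈ range n, (∑ k ∈ range (j + 1), x ^ k / k ! * a (n - j + k)) ^ 2 =
      ∑ j ∈ Icc 1 n, expShift n a x j ^ 2 := by
  refine sum_nbij' (n - ·) (n - ·) (fun j hj ↦ ?_) (fun j hj ↦ ?_) (fun j hj ↦ ?_)
    (fun j hj ↦ ?_) (fun j hj ↦ ?_) <;> simp only [mem_range, mem_Icc] at hj ⊢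
  any_goals omega
  rw [expShift, show n + 1 - (n - j) = j + 1 by omega]

theorem gen_ftt_strict_general (n : ℕ) (a : ℕ → ℝ)
    (ha : ∃ j ∈ Finset.Icc 1 n, a j ≠ 0) (x : ℝ) (hx : 0 < x)
    (α : ℝ) (hα : Real.cos (π / (n + 1)) < α) :
    ∑ j ∈ Finset.range n, (∑ k ∈ Finset.range (j + 1),
        x ^ k / (Nat.factorial k : ℝ) * a (n - j + k)) ^ 2 <
      Real.exp (2 * x * α) * ∑ j ∈ Finset.Icc 1 n, a j ^ 2 := by
  have hpos : 0 < ∑ j ∈ Icc 1 n, a j ^ 2 := by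
    obtain ⟨j, hj, hja⟩ := ha
    exact sum_pos' (fun i _ ↦ sq_nonneg _) ⟨j, hj, by positivity⟩
  rw [sum_range_sq_eq_sum_sq_expShift]
  calc _ ≤ exp (2 * cos (π / (n + 1)) * x) * ∑ j ∈ Icc 1 n, a j ^ 2 :=
        sum_sq_expShift_le n a hx.le
    _ < exp (2 * x * α) * ∑ j ∈ Icc 1 n, a j ^ 2 :=
        mul_lt_mul_of_pos_right (exp_lt_exp.2 (by nlinarith)) hpos

/-- Strict generalized Fan–Taussky–Todd inequality: for `a₁, …, aₙ` not all zero,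
`x > 0` and `α > cos(π/(n+1))`,
`∑_{j=0}^{n-1} ( ∑_{k=0}^{j} (x^k/k!) a_{n-j+k} )² < e^{2xα} ∑_{j=1}^n a_j²`. -/
theorem gen_ftt_strict (n : ℕ) (hn : 1 ≤ n) (a : ℕ → ℝ)
    (ha : ∃ j ∈ Finset.Icc 1 n, a j ≠ 0) (x : ℝ) (hx : 0 < x)
    (α : ℝ) (hα : Real.cos (π / (n + 1)) < α) :
    ∑ j ∈ Finset.range n, (∑ k ∈ Finset.range (j + 1),
        x ^ k / (Nat.factorial k : ℝ) * a (n - j + k)) ^ 2 <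
      Real.exp (2 * x * α) * ∑ j ∈ Finset.Icc 1 n, a j ^ 2 :=
  gen_ftt_strict_general n a ha x hx α hα
end
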